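/- arXiv:1311.0811 — 2 statements merged into one kernel-verified Lean document; each statement's English description precedes it below -/
import Mathlib

section
/- Let X be a T×n real matrix, β* ∈ ℝ^n, ε ∈ ℝ^T and y = Xβ* + ε, and let λ > 0 be such that ‖X'ε/T‖_{ℓ∞} ≤ λ/2. Then any minimizer β̂ of the LASSO objective L(β) = (1/T)‖y − Xβ‖² + 2λ‖β‖_{ℓ1} satisfies: (1) (1/T)‖Xβ̂ − Xβ*‖² + λ‖β̂ − β*‖_{ℓ1} ≤ 2λ(‖β̂ − β*‖_{ℓ1} + ‖β*‖_{ℓ1} − ‖β̂‖_{ℓ1}); (2) (1/T)‖Xβ̂ − Xβ*‖² + λ‖β̂ − β*‖_{ℓ1} ≤ 4λ·min(‖β̂_J − β*_J‖_{ℓ1}, ‖β*_J‖_{ℓ1}); (3) ‖β̂_{J^c} − β*_{J^c}‖_{ℓ1} ≤ 3‖β̂_J − β*_J‖_{ℓ1}, where J = {j : β*_j ≠ 0}. -/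
namespace LassoDet

/-- ℓ1 norm of a vector -/
def l1 {ι : Type*} [Fintype ι] (v : ι → ℝ) : ℝ := ∑ q, |v q|

/-- ℓ1 norm of the subvector indexed by `R` -/
def l1F {ι : Type*} (R : Finset ι) (v : ι → ℝ) : ℝ := ∑ q ∈ R, |v q|

/-- the LASSO objective `(1/T)‖y − Xβ‖² + 2λ‖β‖₁` -/
noncomputable def lassoObj {T n : ℕ} (X : Matrix (Fin T) (Fin n) ℝ) (y : Fin T → ℝ)
    (lam : ℝ) (β : Fin n → ℝ) : ℝ :=
  (1 / (T : ℝ)) * ∑ t, (y t - ∑ j, X t j * β j) ^ 2 + 2 * lam * l1 β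

end LassoDet

/-!
Comparing the objective at `β̂` with its value at `β*` and expanding the square gives the basic
inequality `(1/T)‖Xδ‖² ≤ (2/T)⟨X'ε, δ⟩ + 2λ(‖β*‖₁ − ‖β̂‖₁)` for `δ = β̂ − β*`; the noise
condition bounds the cross term by `λ‖δ‖₁`, which is (1). Since `β*` vanishes off `J`, the
right-hand side of (1) only involves coordinates in `J`, where the triangle inequality bounds it
by `4λ min(‖δ_J‖₁, ‖β*_J‖₁)`, giving (2); dropping the quadratic term in (2) gives (3).
-/

namespace LassoDet

open Finset

section L1Norm

variable {ι : Type*}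

theorem sum_mul_le_mul_l1 [Fintype ι] (v w : ι → ℝ) {c : ℝ} (hw : ∀ i, |w i| ≤ c) :
    ∑ i, v i * w i ≤ c * l1 v := by
  rw [l1, mul_sum]
  refine sum_le_sum fun i _ => ?_
  calc v i * w i ≤ |v i| * |w i| := by rw [← abs_mul]; exact le_abs_self _
    _ ≤ c * |v i| := by rw [mul_comm]; exact mul_le_mul_of_nonneg_right (hw i) (abs_nonneg _)

theorem l1_eq_l1F_add_l1F_compl [Fintype ι] [DecidableEq ι] (R : Finset ι) (v : ι → ℝ) :
    l1 v = l1F R v + l1F Rᶜ v :=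
  (sum_add_sum_compl R _).symm

theorem l1F_sub_le_l1F_add (R : Finset ι) (b c : ι → ℝ) :
    l1F R (fun i => b i - c i) ≤ l1F R b + l1F R c := by
  rw [l1F, l1F, l1F, ← sum_add_distrib]
  exact sum_le_sum fun i _ => abs_sub (b i) (c i)

theorem l1F_le_l1F_add_l1F_sub (R : Finset ι) (b c : ι → ℝ) :
    l1F R c ≤ l1F R b + l1F R (fun i => b i - c i) := by
  rw [l1F, l1F, l1F, ← sum_add_distrib]
  refine sum_le_sum fun i _ => ?_
  linarith [abs_sub_abs_le_abs_sub (c i) (b i), abs_sub_comm (c i) (b i)]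

theorem l1_sub_add_l1_sub_l1_eq_l1F [Fintype ι] [DecidableEq ι] (R : Finset ι) (b c : ι → ℝ)
    (hc : ∀ i ∉ R, c i = 0) :
    l1 (fun i => b i - c i) + l1 c - l1 b
      = l1F R (fun i => b i - c i) + l1F R c - l1F R b := by
  have hcompl : l1F Rᶜ (fun i => b i - c i) = l1F Rᶜ b :=
    sum_congr rfl fun i hi => by simp only [hc i (mem_compl.mp hi), sub_zero]
  have hc_compl : l1F Rᶜ c = 0 :=
    sum_eq_zero fun i hi => by rw [hc i (mem_compl.mp hi), abs_zero]
  rw [l1_eq_l1F_add_l1F_compl R, l1_eq_l1F_add_l1F_compl R c, l1_eq_l1F_add_l1F_compl R b,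
    hcompl, hc_compl]
  ring

theorem l1F_sub_add_l1F_sub_l1F_le_two_mul_min (R : Finset ι) (b c : ι → ℝ) :
    l1F R (fun i => b i - c i) + l1F R c - l1F R b
      ≤ 2 * min (l1F R (fun i => b i - c i)) (l1F R c) := by
  rw [mul_min_of_nonneg _ _ zero_le_two]
  have hsub := l1F_sub_le_l1F_add R b c
  have hc := l1F_le_l1F_add_l1F_sub R b c
  exact le_min (by linarith) (by linarith)

end L1Norm

theorem lassoObj_sub_lassoObj_eq {T n : ℕ} (X : Matrix (Fin T) (Fin n) ℝ)
    (βstar : Fin n → ℝ) (ε y : Fin T → ℝ) (hy : ∀ t, y t = ∑ j, X t j * βstar j + ε t)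
    (lam : ℝ) (β : Fin n → ℝ) :
    lassoObj X y lam β - lassoObj X y lam βstar
      = (1 / (T : ℝ)) * ∑ t, (∑ j, X t j * (β j - βstar j)) ^ 2
        - 2 * ∑ j, (β j - βstar j) * ((1 / (T : ℝ)) * ∑ t, X t j * ε t)
        + 2 * lam * (l1 β - l1 βstar) := by
  set u : Fin T → ℝ := fun t => ∑ j, X t j * (β j - βstar j)
  have hres : ∀ t, y t - ∑ j, X t j * β j = ε t - u t := fun t => by
    simp only [hy, u, mul_sub, sum_sub_distrib]
    ring
  have hres_star : ∀ t, y t - ∑ j, X t j * βstar j = ε t := fun t => by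
    rw [hy]
    ring
  have hcross : ∑ t, ε t * u t = ∑ j, (β j - βstar j) * ∑ t, X t j * ε t := by
    simp only [u, mul_sum]
    rw [sum_comm]
    exact sum_congr rfl fun j _ => sum_congr rfl fun t _ => by ring
  have hexpand : ∑ t, (ε t - u t) ^ 2 - ∑ t, ε t ^ 2 = ∑ t, u t ^ 2 - 2 * ∑ t, ε t * u t := by
    rw [mul_sum, ← sum_sub_distrib, ← sum_sub_distrib]
    exact sum_congr rfl fun t _ => by ring
  simp only [lassoObj, hres, hres_star]
  simp only [← mul_sum, mul_left_comm _ (1 / (T : ℝ))]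
  rw [← hcross]
  linear_combination (1 / (T : ℝ)) * hexpand

theorem lasso_basic_inequality {T n : ℕ} (X : Matrix (Fin T) (Fin n) ℝ)
    (βstar : Fin n → ℝ) (ε y : Fin T → ℝ) (hy : ∀ t, y t = ∑ j, X t j * βstar j + ε t)
    {lam : ℝ} (hnoise : ∀ j, |(1 / (T : ℝ)) * ∑ t, X t j * ε t| ≤ lam / 2)
    {βhat : Fin n → ℝ} (hmin : lassoObj X y lam βhat ≤ lassoObj X y lam βstar) :
    (1 / (T : ℝ)) * ∑ t, (∑ j, X t j * (βhat j - βstar j)) ^ 2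
        + lam * l1 (fun j => βhat j - βstar j)
      ≤ 2 * lam * (l1 (fun j => βhat j - βstar j) + l1 βstar - l1 βhat) := by
  have hexcess := lassoObj_sub_lassoObj_eq X βstar ε y hy lam βhat
  have hcross := sum_mul_le_mul_l1 (fun j => βhat j - βstar j) _ hnoise
  linarith

end LassoDet

/-- **Deterministic core of Theorem 1.** If `‖X'ε/T‖_∞ ≤ λ/2` then any LASSO minimizer
satisfies the three basic inequalities. -/
theorem lasso_deterministic_inequalities {T n : ℕ}
    (X : Matrix (Fin T) (Fin n) ℝ) (βstar : Fin n → ℝ) (ε : Fin T → ℝ)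
    (y : Fin T → ℝ) (hy : ∀ t, y t = ∑ j, X t j * βstar j + ε t)
    (lam : ℝ) (hlam : 0 < lam)
    (hnoise : ∀ j : Fin n, |(1 / (T : ℝ)) * ∑ t, X t j * ε t| ≤ lam / 2)
    (βhat : Fin n → ℝ)
    (hmin : ∀ β : Fin n → ℝ,
      LassoDet.lassoObj X y lam βhat ≤ LassoDet.lassoObj X y lam β)
    (J : Finset (Fin n)) (hJ : ∀ j, j ∈ J ↔ βstar j ≠ 0) :
    ((1 / (T : ℝ)) * ∑ t, (∑ j, X t j * (βhat j - βstar j)) ^ 2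
        + lam * LassoDet.l1 (fun j => βhat j - βstar j)
      ≤ 2 * lam * (LassoDet.l1 (fun j => βhat j - βstar j)
          + LassoDet.l1 βstar - LassoDet.l1 βhat)) ∧
    ((1 / (T : ℝ)) * ∑ t, (∑ j, X t j * (βhat j - βstar j)) ^ 2
        + lam * LassoDet.l1 (fun j => βhat j - βstar j)
      ≤ 4 * lam * min (LassoDet.l1F J (fun j => βhat j - βstar j))
          (LassoDet.l1F J βstar)) ∧
    (LassoDet.l1F Jᶜ (fun j => βhat j - βstar j)
      ≤ 3 * LassoDet.l1F J (fun j => βhat j - βstar j)) := by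
  open LassoDet in
  have hbasic := lasso_basic_inequality X βstar ε y hy hnoise (hmin βstar)
  have hsupport : ∀ j ∉ J, βstar j = 0 := fun j hj => not_not.mp (mt (hJ j).mpr hj)
  have hcone : _ ≤ 4 * lam * min (l1F J (fun j => βhat j - βstar j)) (l1F J βstar) :=
    hbasic.trans <| by
      rw [l1_sub_add_l1_sub_l1_eq_l1F J βhat βstar hsupport]
      nlinarith [l1F_sub_add_l1F_sub_l1F_le_two_mul_min J βhat βstar]
  refine ⟨hbasic, hcone, le_of_mul_le_mul_left ?_ hlam⟩
  have hquad : 0 ≤ (1 / (T : ℝ)) * ∑ t, (∑ j, X t j * (βhat j - βstar j)) ^ 2 := by positivity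
  rw [l1_eq_l1F_add_l1F_compl J] at hcone
  nlinarith [min_le_left (l1F J (fun j => βhat j - βstar j)) (l1F J βstar)]
end

section
/- Let A and B be two positive semi-definite n×n real matrices, let 1 ≤ s ≤ n, and let δ = max_{1≤i,j≤n} |A_{i,j} − B_{i,j}|. If A satisfies the restricted eigenvalue condition RE(s) with constant κ_A, then κ_B² ≥ κ_A² − 16 s δ, where κ²_M = min over subsets R ⊆ {1,…,n} with |R| ≤ s and over vectors v ∈ ℝ^n, v ≠ 0, satisfying ‖v_{R^c}‖_{ℓ1} ≤ 3‖v_R‖_{ℓ1}, of v'Mv/‖v_R‖². -/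
/-!
For an admissible pair `(R, v)`, entrywise closeness gives `|v'Av - v'Bv| ≤ δ ‖v‖₁²`, while the
cone condition gives `‖v‖₁ ≤ 4 ‖v_R‖₁ ≤ 4 √s ‖v_R‖` (Cauchy–Schwarz on `R`). Hence the Rayleigh
quotients of `A` and `B` differ by at most `16 s δ`, and this passes to the infima; positive
semidefiniteness of `A` makes its infimum a genuine one. When there is no admissible pair both
infima are the junk value `sInf ∅ = 0`.
-/

namespace REPerturb

/-- ℓ1 norm of the subvector indexed by `R` -/
def l1F {ι : Type*} (R : Finset ι) (v : ι → ℝ) : ℝ := ∑ q ∈ R, |v q|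

/-- the restricted eigenvalue `κ²_A(s)`: the infimum of `v'Av/‖v_R‖²` over sets `R` of
cardinality at most `s` and nonzero `v` with `‖v_{R^c}‖₁ ≤ 3‖v_R‖₁` -/
noncomputable def kappaSq {ι : Type*} [Fintype ι] [DecidableEq ι]
    (A : Matrix ι ι ℝ) (s : ℕ) : ℝ :=
  sInf { r : ℝ | ∃ (R : Finset ι) (v : ι → ℝ), R.card ≤ s ∧ v ≠ 0 ∧
    l1F Rᶜ v ≤ 3 * l1F R v ∧ r = (∑ i, ∑ j, v i * A i j * v j) / (∑ q ∈ R, (v q) ^ 2) }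

variable {ι : Type*}

theorem l1F_nonneg (R : Finset ι) (v : ι → ℝ) : 0 ≤ l1F R v :=
  Finset.sum_nonneg fun _ _ => abs_nonneg _

variable [Fintype ι]

theorem abs_sum_sum_mul_sub_le {A B : Matrix ι ι ℝ} {δ : ℝ}
    (hδ : ∀ i j, |A i j - B i j| ≤ δ) (v : ι → ℝ) :
    |∑ i, ∑ j, v i * A i j * v j - ∑ i, ∑ j, v i * B i j * v j| ≤ δ * (∑ i, |v i|) ^ 2 := by
  have hdiff : ∑ i, ∑ j, v i * A i j * v j - ∑ i, ∑ j, v i * B i j * v j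
      = ∑ i, ∑ j, v i * (A i j - B i j) * v j := by
    simp only [← Finset.sum_sub_distrib, mul_sub, sub_mul]
  calc |∑ i, ∑ j, v i * A i j * v j - ∑ i, ∑ j, v i * B i j * v j|
      ≤ ∑ i, ∑ j, |v i| * δ * |v j| := by
        rw [hdiff]
        refine (Finset.abs_sum_le_sum_abs _ _).trans (Finset.sum_le_sum fun i _ => ?_)
        refine (Finset.abs_sum_le_sum_abs _ _).trans (Finset.sum_le_sum fun j _ => ?_)
        rw [abs_mul, abs_mul]
        gcongr
        exact hδ i j
    _ = δ * (∑ i, |v i|) ^ 2 := by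
        rw [sq, Fintype.sum_mul_sum]
        simp only [Finset.mul_sum]
        exact Finset.sum_congr rfl fun i _ => Finset.sum_congr rfl fun j _ => by ring

variable [DecidableEq ι]

/-- The pairs `(R, v)` over which the infimum defining `kappaSq M s` is taken. -/
def Admissible (s : ℕ) (R : Finset ι) (v : ι → ℝ) : Prop :=
  R.card ≤ s ∧ v ≠ 0 ∧ l1F Rᶜ v ≤ 3 * l1F R v

/-- The quotient `v'Mv / ‖v_R‖²` of which `kappaSq M s` is the infimum. -/
noncomputable def rayleigh (M : Matrix ι ι ℝ) (R : Finset ι) (v : ι → ℝ) : ℝ :=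
  (∑ i, ∑ j, v i * M i j * v j) / ∑ q ∈ R, v q ^ 2

theorem sum_abs_le_four_mul_l1F {R : Finset ι} {v : ι → ℝ} (h : l1F Rᶜ v ≤ 3 * l1F R v) :
    ∑ i, |v i| ≤ 4 * l1F R v := by
  rw [← Finset.sum_add_sum_compl R]
  change l1F R v + l1F Rᶜ v ≤ _
  linarith

theorem sum_sq_pos_of_admissible {s : ℕ} {R : Finset ι} {v : ι → ℝ} (h : Admissible s R v) :
    0 < ∑ q ∈ R, v q ^ 2 := by
  obtain ⟨-, hv, hcone⟩ := h
  refine (Finset.sum_nonneg fun q _ => sq_nonneg (v q)).lt_of_ne fun hzero => hv ?_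
  have hR : ∀ q ∈ R, v q = 0 := fun q hq =>
    pow_eq_zero_iff two_ne_zero |>.mp <|
      (Finset.sum_eq_zero_iff_of_nonneg fun q _ => sq_nonneg (v q)).mp hzero.symm q hq
  have hRc : l1F Rᶜ v = 0 := by
    have : l1F R v = 0 := Finset.sum_eq_zero fun q hq => by simp [hR q hq]
    linarith [l1F_nonneg Rᶜ v]
  funext q
  by_cases hq : q ∈ R
  · exact hR q hq
  · exact abs_eq_zero.mp <| (Finset.sum_eq_zero_iff_of_nonneg fun q _ => abs_nonneg (v q)).mp
      hRc q (Finset.mem_compl.mpr hq)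

theorem sq_sum_abs_le_of_admissible {s : ℕ} {R : Finset ι} {v : ι → ℝ}
    (h : Admissible s R v) : (∑ i, |v i|) ^ 2 ≤ 16 * s * ∑ q ∈ R, v q ^ 2 := by
  obtain ⟨hcard, -, hcone⟩ := h
  have hcs : l1F R v ^ 2 ≤ R.card * ∑ q ∈ R, v q ^ 2 := by
    simpa only [l1F, sq_abs] using sq_sum_le_card_mul_sum_sq (s := R) (f := fun q => |v q|)
  have hcard' : (R.card : ℝ) ≤ s := by exact_mod_cast hcard
  calc (∑ i, |v i|) ^ 2 ≤ (4 * l1F R v) ^ 2 :=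
        pow_le_pow_left₀ (Finset.sum_nonneg fun _ _ => abs_nonneg _)
          (sum_abs_le_four_mul_l1F hcone) 2
    _ ≤ 16 * (R.card * ∑ q ∈ R, v q ^ 2) := by linarith
    _ ≤ 16 * s * ∑ q ∈ R, v q ^ 2 := by
        rw [← mul_assoc]
        gcongr

theorem rayleigh_sub_le {A B : Matrix ι ι ℝ} {δ : ℝ} (hδ : ∀ i j, |A i j - B i j| ≤ δ)
    {s : ℕ} {R : Finset ι} {v : ι → ℝ} (h : Admissible s R v) :
    rayleigh A R v - 16 * s * δ ≤ rayleigh B R v := by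
  have hd := sum_sq_pos_of_admissible h
  obtain ⟨i, -⟩ := Function.ne_iff.mp h.2.1
  have hdiff := (abs_le.mp (abs_sum_sum_mul_sub_le hδ v)).2
  have hcone := mul_le_mul_of_nonneg_left (sq_sum_abs_le_of_admissible h)
    ((abs_nonneg _).trans (hδ i i))
  have : rayleigh A R v - rayleigh B R v ≤ 16 * s * δ := by
    rw [rayleigh, rayleigh, ← sub_div, div_le_iff₀ hd]
    linarith
  linarith

theorem kappaSq_le {M : Matrix ι ι ℝ} (hM : M.PosSemidef) {s : ℕ} {R : Finset ι}
    {v : ι → ℝ} (h : Admissible s R v) : kappaSq M s ≤ rayleigh M R v := by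
  refine csInf_le ⟨0, ?_⟩ ⟨R, v, h.1, h.2.1, h.2.2, rfl⟩
  rintro r ⟨R, v, -, -, -, rfl⟩
  refine div_nonneg ?_ (Finset.sum_nonneg fun q _ => sq_nonneg (v q))
  simpa only [dotProduct, Matrix.mulVec, star_trivial, Finset.mul_sum, ← mul_assoc]
    using hM.dotProduct_mulVec_nonneg v

theorem le_kappaSq {M : Matrix ι ι ℝ} {s : ℕ} {c : ℝ}
    (hex : ∃ (R : Finset ι) (v : ι → ℝ), Admissible s R v)
    (h : ∀ R v, Admissible s R v → c ≤ rayleigh M R v) : c ≤ kappaSq M s := by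
  obtain ⟨R, v, hRv⟩ := hex
  refine le_csInf ⟨_, R, v, hRv.1, hRv.2.1, hRv.2.2, rfl⟩ ?_
  rintro r ⟨R, v, hcard, hv, hcone, rfl⟩
  exact h R v ⟨hcard, hv, hcone⟩

theorem kappaSq_eq_zero {M : Matrix ι ι ℝ} {s : ℕ}
    (hex : ¬∃ (R : Finset ι) (v : ι → ℝ), Admissible s R v) :
    kappaSq M s = 0 := by
  rw [kappaSq]
  convert Real.sInf_empty
  refine Set.eq_empty_of_forall_notMem ?_
  rintro r ⟨R, v, hcard, hv, hcone, -⟩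
  exact hex ⟨R, v, hcard, hv, hcone⟩

end REPerturb

theorem restricted_eigenvalue_perturbation_general {n : ℕ}
    (A B : Matrix (Fin n) (Fin n) ℝ)
    (hA : A.PosSemidef)
    (s : ℕ) :
    REPerturb.kappaSq B s
      ≥ REPerturb.kappaSq A s - 16 * (s : ℝ) * (⨆ i : Fin n, ⨆ j : Fin n, |A i j - B i j|) := by
  have hδ : ∀ i j, |A i j - B i j| ≤ ⨆ i : Fin n, ⨆ j : Fin n, |A i j - B i j| := fun i j =>
    (Finite.le_ciSup (fun j => |A i j - B i j|) j).trans
      (Finite.le_ciSup (fun i => ⨆ j : Fin n, |A i j - B i j|) i)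
  by_cases hex : ∃ (R : Finset (Fin n)) (v : Fin n → ℝ), REPerturb.Admissible s R v
  · exact REPerturb.le_kappaSq hex fun R v h =>
      (sub_le_sub_right (REPerturb.kappaSq_le hA h) _).trans (REPerturb.rayleigh_sub_le hδ h)
  · have hδ0 : 0 ≤ ⨆ i : Fin n, ⨆ j : Fin n, |A i j - B i j| :=
      Real.iSup_nonneg fun i => Real.iSup_nonneg fun j => abs_nonneg _
    rw [REPerturb.kappaSq_eq_zero hex, REPerturb.kappaSq_eq_zero hex, ge_iff_le, zero_sub,
      neg_nonpos]
    exact mul_nonneg (by positivity) hδ0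

/-- **Lemma (restricted eigenvalue perturbation).** If `A` and `B` are positive semi-definite
`n×n` matrices, `A` satisfies RE(s) (i.e. `κ_A² > 0`), and
`δ = max_{i,j} |A_{ij} − B_{ij}|`, then `κ_B² ≥ κ_A² − 16 s δ`. -/
theorem restricted_eigenvalue_perturbation {n : ℕ}
    (A B : Matrix (Fin n) (Fin n) ℝ)
    (hA : A.PosSemidef) (hB : B.PosSemidef)
    (s : ℕ) (hs1 : 1 ≤ s) (hsn : s ≤ n)
    (hRE : 0 < REPerturb.kappaSq A s) :
    REPerturb.kappaSq B s
      ≥ REPerturb.kappaSq A s - 16 * (s : ℝ) * (⨆ i : Fin n, ⨆ j : Fin n, |A i j - B i j|) :=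
  restricted_eigenvalue_perturbation_general A B hA s
end
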